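/- Let q : 𝔻 → ℂ be continuous with |q(z)| ≤ q₀ < 1 for all z ∈ 𝔻. Let ξ : 𝔻 → 𝔻 be a C¹ diffeomorphism of the unit disc onto itself satisfying the homogeneous Beltrami equation ξ_z̄ = q·ξ_z on 𝔻, and let v : 𝔻 → ℂ be any C¹ function satisfying v_z̄ = q·v_z on 𝔻. Then the function φ = v ∘ ξ⁻¹ is holomorphic on 𝔻. -/

import Mathlib

/-!
A solution `w` of `w_z̄ = q w_z` at a point has real derivative `h ↦ w_z (h + q h̄)` there, so
two solutions of the same equation have real derivatives that are complex multiples of each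
other once `ξ_z ≠ 0`. Since `ξ ∘ ψ = id`, the derivative of `ξ` is invertible, which forces
`ξ_z ≠ 0`; hence `D(v ∘ ψ) = (v_z / ξ_z) • (Dξ ∘ Dψ) = (v_z / ξ_z) • id` is complex linear.
-/

open Complex Metric

noncomputable section

/-- The Wirtinger derivative `w_z̄ = (w_x + i w_y)/2` (full derivative). -/
def dbarC (w : ℂ → ℂ) (z : ℂ) : ℂ :=
  (2⁻¹ : ℂ) * (fderiv ℝ w z 1 + Complex.I * fderiv ℝ w z Complex.I)

/-- The Wirtinger derivative `w_z = (w_x − i w_y)/2` (full derivative). -/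
def dzC (w : ℂ → ℂ) (z : ℂ) : ℂ :=
  (2⁻¹ : ℂ) * (fderiv ℝ w z 1 - Complex.I * fderiv ℝ w z Complex.I)

open Filter Topology ComplexConjugate

theorem ContinuousLinearMap.complex_apply_eq_mul_add_mul_conj (L : ℂ →L[ℝ] ℂ) (h : ℂ) :
    L h = 2⁻¹ * (L 1 - I * L I) * h + 2⁻¹ * (L 1 + I * L I) * conj h := by
  have hh : h = h.re • (1 : ℂ) + h.im • I := by simp
  have hL : L h = h.re * L 1 + h.im * L I := by
    conv_lhs => rw [hh]
    rw [map_add, map_smul, map_smul, real_smul, real_smul]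
  have hconj : conj h = h.re - h.im * I := by simp [Complex.ext_iff]
  rw [hL, hconj]
  linear_combination 2⁻¹ * (L 1 - I * L I) * re_add_im h + h.im * L I * I_sq

theorem fderiv_apply_eq_dzC_mul_add_dbarC_mul (w : ℂ → ℂ) (z h : ℂ) :
    fderiv ℝ w z h = dzC w z * h + dbarC w z * conj h :=
  (fderiv ℝ w z).complex_apply_eq_mul_add_mul_conj h

theorem fderiv_apply_of_dbarC_eq {w : ℂ → ℂ} {z q : ℂ} (hw : dbarC w z = q * dzC w z) (h : ℂ) :
    fderiv ℝ w z h = dzC w z * (h + q * conj h) := by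
  rw [fderiv_apply_eq_dzC_mul_add_dbarC_mul, hw]; ring

theorem dzC_ne_zero_of_dbarC_eq {w : ℂ → ℂ} {z q : ℂ} (hw : dbarC w z = q * dzC w z)
    (hne : fderiv ℝ w z ≠ 0) : dzC w z ≠ 0 := by
  refine fun h0 ↦ hne (ContinuousLinearMap.ext fun h ↦ ?_)
  rw [fderiv_apply_of_dbarC_eq hw, h0, zero_mul]; rfl

theorem fderiv_eq_smul_fderiv_of_dbarC_eq {f g : ℂ → ℂ} {z q : ℂ}
    (hf : dbarC f z = q * dzC f z) (hg : dbarC g z = q * dzC g z) (hf0 : dzC f z ≠ 0) :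
    fderiv ℝ g z = (dzC g z / dzC f z) • fderiv ℝ f z := by
  ext1 h
  rw [smul_apply, smul_eq_mul, fderiv_apply_of_dbarC_eq hf, fderiv_apply_of_dbarC_eq hg]
  field_simp

theorem HasFDerivAt.hasDerivAt_of_eq_smul_id {f : ℂ → ℂ} {c z : ℂ}
    (h : HasFDerivAt f (c • ContinuousLinearMap.id ℝ ℂ) z) : HasDerivAt f c z := by
  have hc : c • ContinuousLinearMap.id ℝ ℂ =
      (c • ContinuousLinearMap.id ℂ ℂ).restrictScalars ℝ := by
    ext1; simp
  rw [hc] at h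
  simpa using (hasFDerivAt_of_restrictScalars ℝ h rfl).hasDerivAt

theorem differentiableAt_comp_of_dbarC_eq {ξ ψ v : ℂ → ℂ} {z q : ℂ}
    (hψ : DifferentiableAt ℝ ψ z) (hξ : DifferentiableAt ℝ ξ (ψ z))
    (hv : DifferentiableAt ℝ v (ψ z)) (hinv : ξ ∘ ψ =ᶠ[𝓝 z] id)
    (hξeq : dbarC ξ (ψ z) = q * dzC ξ (ψ z)) (hveq : dbarC v (ψ z) = q * dzC v (ψ z)) :
    DifferentiableAt ℂ (v ∘ ψ) z := by
  have hid : (fderiv ℝ ξ (ψ z)).comp (fderiv ℝ ψ z) = ContinuousLinearMap.id ℝ ℂ := by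
    rw [← fderiv_comp z hξ hψ, hinv.fderiv_eq, fderiv_id]
  have hξ0 : dzC ξ (ψ z) ≠ 0 := by
    refine dzC_ne_zero_of_dbarC_eq hξeq fun h0 ↦ ?_
    simpa [h0] using congrArg (fun L ↦ L 1) hid
  have hcomp := hv.hasFDerivAt.comp z hψ.hasFDerivAt
  rw [fderiv_eq_smul_fderiv_of_dbarC_eq hξeq hveq hξ0, ContinuousLinearMap.smul_comp, hid] at hcomp
  exact hcomp.hasDerivAt_of_eq_smul_id.differentiableAt

theorem beltrami_factorization_general
    (q ξ ψ v : ℂ → ℂ)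
    (hξ : ContDiffOn ℝ 1 ξ (Metric.ball (0 : ℂ) 1))
    (hbij : Set.BijOn ξ (Metric.ball (0 : ℂ) 1) (Metric.ball (0 : ℂ) 1))
    (hψ : ContDiffOn ℝ 1 ψ (Metric.ball (0 : ℂ) 1))
    (hinv : Set.InvOn ψ ξ (Metric.ball (0 : ℂ) 1) (Metric.ball (0 : ℂ) 1))
    (hξeq : ∀ z ∈ Metric.ball (0 : ℂ) 1, dbarC ξ z = q z * dzC ξ z)
    (hv : ContDiffOn ℝ 1 v (Metric.ball (0 : ℂ) 1))
    (hveq : ∀ z ∈ Metric.ball (0 : ℂ) 1, dbarC v z = q z * dzC v z) :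
    DifferentiableOn ℂ (v ∘ ψ) (Metric.ball (0 : ℂ) 1) := by
  intro z hz
  have hψz : ψ z ∈ ball (0 : ℂ) 1 := by
    obtain ⟨u, hu, rfl⟩ := hbij.surjOn hz
    rwa [hinv.1 hu]
  have hinv_near : ξ ∘ ψ =ᶠ[𝓝 z] id :=
    eventually_of_mem (isOpen_ball.mem_nhds hz) fun _ hx ↦ hinv.2 hx
  have hdiff {f : ℂ → ℂ} {x : ℂ} (hf : ContDiffOn ℝ 1 f (ball 0 1)) (hx : x ∈ ball (0 : ℂ) 1) :
      DifferentiableAt ℝ f x :=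
    (hf.contDiffAt (isOpen_ball.mem_nhds hx)).differentiableAt one_ne_zero
  exact (differentiableAt_comp_of_dbarC_eq (hdiff hψ hz) (hdiff hξ hψz) (hdiff hv hψz)
    hinv_near (hξeq _ hψz) (hveq _ hψz)).differentiableWithinAt

/-- If `ξ` is a `C¹` diffeomorphism of the unit disc onto itself solving the homogeneous
Beltrami equation `ξ_z̄ = q·ξ_z` with `|q| ≤ q₀ < 1`, and `v` is any `C¹` solution of
`v_z̄ = q·v_z` on the disc, then `φ = v ∘ ξ⁻¹` is holomorphic on the disc. -/
theorem beltrami_factorization (q₀ : ℝ) (hq₀ : q₀ < 1)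
    (q ξ ψ v : ℂ → ℂ)
    (hq : ContinuousOn q (Metric.ball (0 : ℂ) 1))
    (hqb : ∀ z ∈ Metric.ball (0 : ℂ) 1, ‖q z‖ ≤ q₀)
    (hξ : ContDiffOn ℝ 1 ξ (Metric.ball (0 : ℂ) 1))
    (hbij : Set.BijOn ξ (Metric.ball (0 : ℂ) 1) (Metric.ball (0 : ℂ) 1))
    (hψ : ContDiffOn ℝ 1 ψ (Metric.ball (0 : ℂ) 1))
    (hinv : Set.InvOn ψ ξ (Metric.ball (0 : ℂ) 1) (Metric.ball (0 : ℂ) 1))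
    (hξeq : ∀ z ∈ Metric.ball (0 : ℂ) 1, dbarC ξ z = q z * dzC ξ z)
    (hv : ContDiffOn ℝ 1 v (Metric.ball (0 : ℂ) 1))
    (hveq : ∀ z ∈ Metric.ball (0 : ℂ) 1, dbarC v z = q z * dzC v z) :
    DifferentiableOn ℂ (v ∘ ψ) (Metric.ball (0 : ℂ) 1) :=
  beltrami_factorization_general q ξ ψ v hξ hbij hψ hinv hξeq hv hveq
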